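/- arXiv:1701.08387 — 3 statements merged into one kernel-verified Lean document; each statement's English description precedes it below -/
import Mathlib

section
/- Let n ≥ 1 and let a, b : Fin n → ℝ be strictly increasing sequences such that the 2n real numbers a i and b j are pairwise distinct and all lie in the half-open interval [a 0, a 0 + 1). Assume that for every real t, the number of indices i with a i ≤ t is at least the number of indices j with b j ≤ t. Then a i < b i for every i, and consequently 0 < (∑ j, b j) − (∑ i, a i) < n. -/
open Finset

theorem interlacing_gamma_bounds (n : ℕ) (hn : 1 ≤ n) (a b : Fin n → ℝ)
    (ha : StrictMono a) (hb : StrictMono b)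
    (hab : ∀ i j, a i ≠ b j)
    (haI : ∀ i, a i ∈ Set.Ico (a ⟨0, hn⟩) (a ⟨0, hn⟩ + 1))
    (hbI : ∀ j, b j ∈ Set.Ico (a ⟨0, hn⟩) (a ⟨0, hn⟩ + 1))
    (hdom : ∀ t : ℝ,
      (univ.filter fun j => b j ≤ t).card ≤ (univ.filter fun i => a i ≤ t).card) :
    (∀ i, a i < b i) ∧
      0 < (∑ j, b j) - (∑ i, a i) ∧ (∑ j, b j) - (∑ i, a i) < n := by
  have key : ∀ i, a i < b i := by
    intro i
    by_contra h
    push_neg at h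
    have hlt : b i < a i := lt_of_le_of_ne h (fun e => hab i i e.symm)
    have h1 : (i : ℕ) + 1 ≤ (univ.filter fun j => b j ≤ b i).card := by
      have hsub : Finset.Iic i ⊆ univ.filter fun j => b j ≤ b i := by
        intro j hj
        simp only [mem_filter, mem_univ, true_and]
        exact hb.monotone (Finset.mem_Iic.mp hj)
      calc (i : ℕ) + 1 = (Finset.Iic i).card := (Fin.card_Iic i).symm
        _ ≤ _ := Finset.card_le_card hsub
    have h2 : (univ.filter fun k => a k ≤ b i).card ≤ (i : ℕ) := by
      have hsub : (univ.filter fun k => a k ≤ b i) ⊆ Finset.Iio i := by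
        intro k hk
        simp only [mem_filter, mem_univ, true_and] at hk
        exact Finset.mem_Iio.mpr (ha.lt_iff_lt.mp (lt_of_le_of_lt hk hlt))
      calc _ ≤ (Finset.Iio i).card := Finset.card_le_card hsub
        _ = (i : ℕ) := Fin.card_Iio i
    have := hdom (b i)
    omega
  refine ⟨key, ?_, ?_⟩
  · have : (0 : ℝ) < ∑ i, (b i - a i) := by
      apply Finset.sum_pos
      · intro i _; linarith [key i]
      · exact Finset.univ_nonempty_iff.mpr (Fin.pos_iff_nonempty.mp hn)
    rw [Finset.sum_sub_distrib] at this
    linarith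
  · have hlt1 : ∀ i, b i - a i < 1 := by
      intro i
      have h1 := (haI i).1
      have h2 := (hbI i).2
      linarith
    have : ∑ i, (b i - a i) < ∑ _i : Fin n, (1 : ℝ) := by
      apply Finset.sum_lt_sum_of_nonempty
      · exact Finset.univ_nonempty_iff.mpr (Fin.pos_iff_nonempty.mp hn)
      · intro i _; exact hlt1 i
    rw [Finset.sum_sub_distrib] at this
    simp only [Finset.sum_const, Finset.card_univ, Fintype.card_fin, nsmul_eq_mul, mul_one] at this
    linarith
end

section
/- Let n ≥ 1 and let α, β : Fin n → ℝ be such that the 2n complex numbers e^{2πi α(i)} and e^{2πi β(j)} are pairwise distinct. Let M₀ be the diagonal matrix with diagonal entries e^{2πi α(k)}, let 𝟏 ∈ ℂⁿ be the all-ones vector, let w ∈ ℂⁿ, and set M₁ := Id + M₀⁻¹ ⬝ (𝟏 ⬝ wᵀ). If det (M₀ ⬝ M₁ − e^{2πi β(j)} • Id) = 0 for every j, then for every j one has ∑ i, w i / (e^{2πi β(j)} − e^{2πi α(i)}) = 1. -/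
/-!
Since `M₀` is invertible, `M₀ M₁ = M₀ + 𝟏 wᵀ`, so `M₀ M₁ - b` is the diagonal matrix
`diag (e^{2πiαᵢ} - b)` plus a rank-one matrix. When `b = e^{2πiβⱼ}` the diagonal part is invertible,
and the matrix determinant lemma gives
`det (M₀ M₁ - b) = ∏ᵢ (e^{2πiαᵢ} - b) · (1 - ∑ᵢ wᵢ / (b - e^{2πiαᵢ}))`,
whose vanishing is the claimed linear equation for `w`.
-/

open Matrix Complex

namespace Matrix

variable {n K : Type*} [Fintype n] [DecidableEq n] [Field K]

theorem det_diagonal_add_vecMulVec {d : n → K} (hd : ∀ i, d i ≠ 0) (u v : n → K) :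
    (diagonal d + vecMulVec u v).det = (∏ i, d i) * (1 + ∑ i, v i * u i / d i) := by
  have hfactor :
      diagonal d + vecMulVec u v = diagonal d * (1 + vecMulVec (fun i => u i / d i) v) := by
    ext i j
    rw [diagonal_mul, add_apply, add_apply, vecMulVec_apply, vecMulVec_apply, mul_add,
      ← mul_assoc, mul_div_cancel₀ _ (hd i), diagonal_apply, one_apply, mul_ite, mul_one, mul_zero]
  rw [hfactor, det_mul, det_diagonal, vecMulVec_eq Unit, det_one_add_replicateCol_mul_replicateRow]
  simp only [dotProduct, mul_div_assoc]

theorem sum_div_sub_eq_one_of_det_eq_zero {a : n → K} {b : K} (hab : ∀ i, a i ≠ b) (w : n → K)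
    (h : (diagonal a + vecMulVec (fun _ => 1) w - b • 1).det = 0) :
    ∑ i, w i / (b - a i) = 1 := by
  have hsub : ∀ i, a i - b ≠ 0 := fun i => sub_ne_zero.2 (hab i)
  have hshift : diagonal a + vecMulVec (fun _ => 1) w - b • 1
      = diagonal (fun i => a i - b) + vecMulVec (fun _ => 1) w := by
    rw [← diagonal_sub, smul_one_eq_diagonal]
    abel
  rw [hshift, det_diagonal_add_vecMulVec hsub, mul_eq_zero] at h
  have hrank_one := h.resolve_left (Finset.prod_ne_zero_iff.2 fun i _ => hsub i)
  have hflip : ∀ i, w i / (b - a i) = -(w i * 1 / (a i - b)) := fun i => by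
    rw [← neg_sub, div_neg, mul_one]
  rw [Finset.sum_congr rfl fun i _ => hflip i, Finset.sum_neg_distrib]
  linear_combination -hrank_one

end Matrix

theorem monodromy_linear_system_general (n : ℕ) (α β : Fin n → ℝ)
    (hdist : Function.Injective
      (Sum.elim (fun i => Complex.exp (2 * Real.pi * Complex.I * α i))
        (fun j => Complex.exp (2 * Real.pi * Complex.I * β j)) : Fin n ⊕ Fin n → ℂ))
    (w : Fin n → ℂ)
    (M₀ : Matrix (Fin n) (Fin n) ℂ)
    (hM₀ : M₀ = Matrix.diagonal fun k => Complex.exp (2 * Real.pi * Complex.I * α k))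
    (M₁ : Matrix (Fin n) (Fin n) ℂ)
    (hM₁ : M₁ = 1 + M₀⁻¹ * Matrix.vecMulVec (fun _ => (1 : ℂ)) w)
    (hdet : ∀ j, (M₀ * M₁ -
      Complex.exp (2 * Real.pi * Complex.I * β j) • (1 : Matrix (Fin n) (Fin n) ℂ)).det = 0) :
    ∀ j, ∑ i, w i / (Complex.exp (2 * Real.pi * Complex.I * β j) -
        Complex.exp (2 * Real.pi * Complex.I * α i)) = 1 := by
  intro j
  have hαβ : ∀ i, exp (2 * Real.pi * I * α i) ≠ exp (2 * Real.pi * I * β j) :=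
    fun i h => Sum.inl_ne_inr (hdist h)
  have hM₀unit : IsUnit M₀.det := by
    rw [hM₀, det_diagonal]
    exact (Finset.prod_ne_zero_iff.2 fun i _ => exp_ne_zero _).isUnit
  have hM₀M₁ : M₀ * M₁ = M₀ + vecMulVec (fun _ => 1) w := by
    rw [hM₁, Matrix.mul_add, Matrix.mul_one, mul_nonsing_inv_cancel_left _ _ hM₀unit]
  refine sum_div_sub_eq_one_of_det_eq_zero hαβ w ?_
  rw [← hM₀, ← hM₀M₁]
  exact hdet j

theorem monodromy_linear_system (n : ℕ) (hn : 1 ≤ n) (α β : Fin n → ℝ)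
    (hdist : Function.Injective
      (Sum.elim (fun i => Complex.exp (2 * Real.pi * Complex.I * α i))
        (fun j => Complex.exp (2 * Real.pi * Complex.I * β j)) : Fin n ⊕ Fin n → ℂ))
    (w : Fin n → ℂ)
    (M₀ : Matrix (Fin n) (Fin n) ℂ)
    (hM₀ : M₀ = Matrix.diagonal fun k => Complex.exp (2 * Real.pi * Complex.I * α k))
    (M₁ : Matrix (Fin n) (Fin n) ℂ)
    (hM₁ : M₁ = 1 + M₀⁻¹ * Matrix.vecMulVec (fun _ => (1 : ℂ)) w)
    (hdet : ∀ j, (M₀ * M₁ -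
      Complex.exp (2 * Real.pi * Complex.I * β j) • (1 : Matrix (Fin n) (Fin n) ℂ)).det = 0) :
    ∀ j, ∑ i, w i / (Complex.exp (2 * Real.pi * Complex.I * β j) -
        Complex.exp (2 * Real.pi * Complex.I * α i)) = 1 :=
  monodromy_linear_system_general n α β hdist w M₀ hM₀ M₁ hM₁ hdet
end

section
/- Let n ≥ 1 and let α, β : Fin n → ℝ be such that the 2n complex numbers e^{2πi α(i)} and e^{2πi β(j)} are pairwise distinct. Let M₀ be the diagonal matrix with entries e^{2πi α(k)}, let N be the matrix with entries N i j = 1 / (e^{2πi β(j)} − e^{2πi α(i)}), let 𝟏 ∈ ℂⁿ be the all-ones vector, and set M₁ := Id + M₀⁻¹ ⬝ (𝟏 ⬝ (𝟏ᵀ ⬝ N⁻¹)). Then the characteristic polynomial of M₀ ⬝ M₁ equals ∏ j, (X − e^{2πi β(j)}); in particular every e^{2πi β(j)} is an eigenvalue of M₀ ⬝ M₁. -/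
/-!
With `a i = e^{2πiα(i)}`, `b j = e^{2πiβ(j)}` and `w = 𝟏ᵀN⁻¹` we have `M₀M₁ = M₀ + 𝟏wᵀ`. The
partial-fraction identity `a/(b - a) + 1 = b/(b - a)` reads `M₀N + 𝟏𝟏ᵀ = N·diag(b)`; multiplying
out, `(M₀ + 𝟏wᵀ)N = M₀N + 𝟏𝟏ᵀ = N·diag(b)`, so `M₀M₁` is conjugate to `diag(b)` by the Cauchy
matrix `N`, which is invertible by Lagrange interpolation.
-/

open Matrix Polynomial

theorem mul_one_add_nonsing_inv_mul {ι R : Type*} [Fintype ι] [DecidableEq ι] [CommRing R]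
    {A : Matrix ι ι R} (hA : IsUnit A.det) (B : Matrix ι ι R) : A * (1 + A⁻¹ * B) = A + B := by
  rw [Matrix.mul_add, Matrix.mul_one, mul_nonsing_inv_cancel_left _ _ hA]

section Cauchy

open Finset Lagrange

variable {ι K : Type*} [Fintype ι] [DecidableEq ι] [Field K]

def cauchyMatrix (a b : ι → K) : Matrix ι ι K :=
  of fun i j => 1 / (b j - a i)

/- For `v ᵥ* cauchyMatrix a b = 0`, the polynomial interpolating `v i / wᵢ` at the nodes `a i`
(`wᵢ` the barycentric weights) vanishes at every `b j` by the barycentric formula, hence is zero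
by degree. -/
theorem det_cauchyMatrix_ne_zero {a b : ι → K} (ha : Function.Injective a)
    (hb : Function.Injective b) (hab : ∀ i j, a i ≠ b j) : (cauchyMatrix a b).det ≠ 0 := by
  intro hdet
  obtain ⟨v, hv, hvN⟩ := exists_vecMul_eq_zero_iff.mpr hdet
  set r : ι → K := fun i => (nodalWeight univ a i)⁻¹ * v i
  have hP : interpolate univ a r = 0 := by
    refine eq_zero_of_degree_lt_of_eval_index_eq_zero univ hb.injOn
      (degree_interpolate_lt _ ha.injOn) fun j _ => ?_
    have hvNj : ∑ i, v i * (1 / (b j - a i)) = 0 := congrFun hvN j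
    rw [eval_interpolate_not_at_node _ fun i _ => (hab i j).symm]
    refine mul_eq_zero_of_right _ (Eq.trans (sum_congr rfl fun i _ => ?_) hvNj)
    have := nodalWeight_ne_zero ha.injOn (mem_univ i)
    simp only [r]
    field_simp
  refine hv (funext fun i => ?_)
  have hr : r i = 0 := by
    rw [← eval_interpolate_at_node r ha.injOn (mem_univ i), hP, eval_zero]
  exact (mul_eq_zero.mp hr).resolve_left
    (inv_ne_zero (nodalWeight_ne_zero ha.injOn (mem_univ i)))

theorem diagonal_mul_cauchyMatrix_add_vecMulVec {a b : ι → K} (hab : ∀ i j, a i ≠ b j) :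
    diagonal a * cauchyMatrix a b + vecMulVec (fun _ => 1) (fun _ => 1) =
      cauchyMatrix a b * diagonal b := by
  ext i j
  have := sub_ne_zero.mpr (hab i j).symm
  simp only [cauchyMatrix, Matrix.add_apply, diagonal_mul, mul_diagonal, vecMulVec_apply,
    of_apply]
  field_simp
  ring

theorem charpoly_diagonal_add_vecMulVec_cauchyMatrix_inv {a b : ι → K}
    (ha : Function.Injective a) (hb : Function.Injective b) (hab : ∀ i j, a i ≠ b j) :
    (diagonal a + vecMulVec (fun _ => 1) ((fun _ => 1) ᵥ* (cauchyMatrix a b)⁻¹)).charpoly =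
      ∏ j, (X - C (b j)) := by
  set N := cauchyMatrix a b
  have hN : IsUnit N.det := (det_cauchyMatrix_ne_zero ha hb hab).isUnit
  have hconj : diagonal a + vecMulVec (fun _ => 1) ((fun _ => 1) ᵥ* N⁻¹) =
      N * diagonal b * N⁻¹ := by
    rw [← diagonal_mul_cauchyMatrix_add_vecMulVec hab, add_mul,
      mul_nonsing_inv_cancel_right _ _ hN, vecMulVec_mul]
  rw [hconj, charpoly_mul_comm, ← Matrix.mul_assoc, nonsing_inv_mul _ hN, Matrix.one_mul,
    charpoly_diagonal]

end Cauchy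

theorem charpoly_hypergeometric_monodromy_general (n : ℕ) (α β : Fin n → ℝ)
    (hdist : Function.Injective
      (Sum.elim (fun i => Complex.exp (2 * Real.pi * Complex.I * α i))
        (fun j => Complex.exp (2 * Real.pi * Complex.I * β j)) : Fin n ⊕ Fin n → ℂ))
    (M₀ : Matrix (Fin n) (Fin n) ℂ)
    (hM₀ : M₀ = Matrix.diagonal fun k => Complex.exp (2 * Real.pi * Complex.I * α k))
    (N : Matrix (Fin n) (Fin n) ℂ)
    (hN : N = Matrix.of fun i j => 1 / (Complex.exp (2 * Real.pi * Complex.I * β j) -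
      Complex.exp (2 * Real.pi * Complex.I * α i)))
    (M₁ : Matrix (Fin n) (Fin n) ℂ)
    (hM₁ : M₁ = 1 + M₀⁻¹ *
      Matrix.vecMulVec (fun _ => (1 : ℂ)) (Matrix.vecMul (fun _ => (1 : ℂ)) N⁻¹)) :
    (M₀ * M₁).charpoly = ∏ j, (X - C (Complex.exp (2 * Real.pi * Complex.I * β j))) ∧
      ∀ j, Complex.exp (2 * Real.pi * Complex.I * β j) ∈ spectrum ℂ (M₀ * M₁) := by
  obtain ⟨ha, hb, hab⟩ := Sum.elim_injective.mp hdist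
  have hM₀det : IsUnit M₀.det := by
    simp [hM₀, Finset.prod_ne_zero_iff, Complex.exp_ne_zero]
  have hchar : (M₀ * M₁).charpoly =
      ∏ j, (X - C (Complex.exp (2 * Real.pi * Complex.I * β j))) := by
    rw [hM₁, mul_one_add_nonsing_inv_mul hM₀det, hM₀, hN]
    exact charpoly_diagonal_add_vecMulVec_cauchyMatrix_inv ha hb hab
  refine ⟨hchar, fun j => ?_⟩
  rw [Matrix.mem_spectrum_iff_isRoot_charpoly, hchar, IsRoot, eval_prod]
  exact Finset.prod_eq_zero (Finset.mem_univ j) (by simp)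

theorem charpoly_hypergeometric_monodromy (n : ℕ) (hn : 1 ≤ n) (α β : Fin n → ℝ)
    (hdist : Function.Injective
      (Sum.elim (fun i => Complex.exp (2 * Real.pi * Complex.I * α i))
        (fun j => Complex.exp (2 * Real.pi * Complex.I * β j)) : Fin n ⊕ Fin n → ℂ))
    (M₀ : Matrix (Fin n) (Fin n) ℂ)
    (hM₀ : M₀ = Matrix.diagonal fun k => Complex.exp (2 * Real.pi * Complex.I * α k))
    (N : Matrix (Fin n) (Fin n) ℂ)
    (hN : N = Matrix.of fun i j => 1 / (Complex.exp (2 * Real.pi * Complex.I * β j) -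
      Complex.exp (2 * Real.pi * Complex.I * α i)))
    (M₁ : Matrix (Fin n) (Fin n) ℂ)
    (hM₁ : M₁ = 1 + M₀⁻¹ *
      Matrix.vecMulVec (fun _ => (1 : ℂ)) (Matrix.vecMul (fun _ => (1 : ℂ)) N⁻¹)) :
    (M₀ * M₁).charpoly = ∏ j, (X - C (Complex.exp (2 * Real.pi * Complex.I * β j))) ∧
      ∀ j, Complex.exp (2 * Real.pi * Complex.I * β j) ∈ spectrum ℂ (M₀ * M₁) :=
  charpoly_hypergeometric_monodromy_general n α β hdist M₀ hM₀ N hN M₁ hM₁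
end
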